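/- Let A be a minimal proper A∞-algebra over a field, concentrated in cohomological degrees [a, b] with a ≤ 0 ≤ b. If b ≥ 1 then the DG endomorphism complex Hom_{Mod∞ A}(A,A) is not locally finite, and if b ≥ 2 then it is moreover unbounded (nonzero in infinitely many degrees in both directions). -/

import Mathlib

/-!
A∞-algebras over a field, encoded via graded pieces `A : ℤ → Type` and
structure maps `m_j : A^{⊗ j} → A` of degree `2 - j`, where a graded map
`A^{⊗ m} → A` of degree `n` is a family of multilinear maps indexed by the
degrees of the `m` arguments.
-/

namespace AInfty

variable (k : Type) [Field k]

/-- The degree-`n` component of the graded vector space `Hom(A^{⊗m}, A)` of graded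
`k`-linear maps: for each choice of degrees `i : Fin m → ℤ` of the arguments,
a multilinear map `A (i 0) × ⋯ × A (i (m-1)) → A ((∑ j, i j) + n)`. -/
abbrev gradedHomPow (A : ℤ → Type) [∀ i, AddCommGroup (A i)] [∀ i, Module k (A i)]
    (m : ℕ) (n : ℤ) : Type :=
  ∀ i : Fin m → ℤ, MultilinearMap k (fun j => A (i j)) (A ((∑ j, i j) + n))

variable (A : ℤ → Type) [∀ i, AddCommGroup (A i)] [∀ i, Module k (A i)]

/-- Transport along an equality of degrees. -/
def gcast {p q : ℤ} (h : p = q) : A p ≃ₗ[k] A q := h ▸ LinearEquiv.refl k (A p)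

/-- The degree-`n` component of the DG endomorphism ring
`Hom_{Mod∞ A}(A,A) = ∏_{m ≥ 1} Σ^{-m+1} Hom(A^{⊗m}, A)`;
the index `m : ℕ` below corresponds to the tensor power `m + 1 ≥ 1`, and the
degree-`n` component of `Σ^{-(m+1)+1} Hom(A^{⊗(m+1)}, A)` is the degree
`n - m` component of `Hom(A^{⊗(m+1)}, A)`. -/
abbrev endComplex (n : ℤ) : Type :=
  ∀ m : ℕ, gradedHomPow k A (m + 1) (n - m)

/-- An (unital) A∞-algebra structure on the graded vector space `A`.
(The Stasheff identities, which play no role in the statements below, are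
not recorded.) -/
structure Structure where
  /-- the structure map `m_{j+1} : A^{⊗ (j+1)} → A`, of degree `2 - (j+1)` -/
  mul : ∀ j : ℕ, gradedHomPow k A (j + 1) (2 - ((j : ℤ) + 1))
  /-- the (strict) unit -/
  one : A 0
  one_mul : ∀ (j : ℤ) (x : A j),
      mul 1 (Fin.cons 0 fun _ => j) (Fin.cons one fun _ => x) =
        gcast k A (by simp [Fin.sum_univ_succ]) x
  mul_one : ∀ (j : ℤ) (x : A j),
      mul 1 (Fin.cons j fun _ => 0) (Fin.cons x fun _ => one) =
        gcast k A (by simp [Fin.sum_univ_succ]) x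

/-- An A∞-algebra is minimal if `m_1 = 0`. -/
def Structure.IsMinimal (s : Structure k A) : Prop := s.mul 0 = 0

end AInfty

open AInfty

/-!
The strict unit forces `A 0 ≠ 0`, and `A b ≠ 0` by assumption. Hence there is a nonzero graded
multilinear map `A^{⊗(m+1)} → A` taking `j ≤ m + 1` arguments of degree `b` and the others of
degree `0` to `A 0`; it lies in degree `m - j b` of the endomorphism complex. For `b ≥ 1` the
choices `m = j b` give infinitely many nonzero components in degree `0`; for `b ≥ 2` the choices
`j = m + 1` and `j = 0` give nonzero degrees `m - (m + 1) b → -∞` and `m → +∞`.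
-/

theorem MultilinearMap.nontrivial_of_nontrivial (k : Type*) [Field k] {ι : Type*} [Fintype ι]
    {V : ι → Type*} [∀ j, AddCommGroup (V j)] [∀ j, Module k (V j)] [∀ j, Nontrivial (V j)]
    {W : Type*} [AddCommGroup W] [Module k W] [Nontrivial W] :
    Nontrivial (MultilinearMap k V W) := by
  obtain ⟨w, hw⟩ := exists_ne (0 : W)
  choose v hv using fun j => exists_ne (0 : V j)
  choose f hf using fun j => Module.Projective.exists_dual_eq_one k (hv j)
  refine ⟨(MultilinearMap.mkPiRing k ι w).compLinearMap f, 0, fun h => hw ?_⟩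
  simpa [hf] using congr($h v)

theorem Module.not_finite_pi_of_infinite_setOf_nontrivial (k : Type*) [Field k] {ι : Type*}
    {M : ι → Type*} [∀ i, AddCommGroup (M i)] [∀ i, Module k (M i)]
    (h : {i | Nontrivial (M i)}.Infinite) : ¬ Module.Finite k (∀ i, M i) := by
  classical
  intro _
  have : Infinite {i // Nontrivial (M i)} := h.to_subtype
  have : Infinite (Σ i, PLift (Nontrivial (M i))) :=
    Infinite.of_injective _ (Equiv.sigmaPLiftEquivSubtype _).symm.injective
  refine Module.Finite.not_linearIndependent_of_infinite _
    (Pi.linearIndependent_single (R := k) (fun i (hi : PLift (Nontrivial (M i))) =>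
      (@exists_ne _ hi.down 0).choose) fun i => ?_)
  rw [linearIndependent_subsingleton_index_iff]
  exact fun hi => (@exists_ne _ hi.down 0).choose_spec

namespace AInfty

variable {k : Type} [Field k] {A : ℤ → Type} [∀ i, AddCommGroup (A i)] [∀ i, Module k (A i)]

theorem Structure.nontrivial_zero (s : Structure k A) (i : ℤ) [Nontrivial (A i)] :
    Nontrivial (A 0) := by
  by_contra h
  rw [not_nontrivial_iff_subsingleton] at h
  obtain ⟨x, hx⟩ := exists_ne (0 : A i)
  have hunit := s.one_mul i x
  rw [MultilinearMap.map_coord_zero _ (0 : Fin 2) (Subsingleton.elim (α := A 0) _ _)] at hunit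
  exact hx ((gcast k A _).map_eq_zero_iff.mp hunit.symm)

variable {b : ℤ} [Nontrivial (A 0)] [Nontrivial (A b)]

theorem nontrivial_gradedHomPow {m j : ℕ} (hj : j ≤ m) {d : ℤ} (hd : j * b + d = 0) :
    Nontrivial (gradedHomPow k A m d) := by
  obtain ⟨l, rfl⟩ := Nat.exists_eq_add_of_le hj
  let i : Fin (j + l) → ℤ := Fin.append (fun _ => b) (fun _ => 0)
  have : ∀ t, Nontrivial (A (i t)) :=
    Fin.addCases (fun _ => by simpa [i]) (fun _ => by simpa [i])
  have : Nontrivial (A (∑ t, i t + d)) := by simpa [i, Fin.sum_univ_add, hd]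
  have := MultilinearMap.nontrivial_of_nontrivial k (V := fun t => A (i t))
    (W := A (∑ t, i t + d))
  exact Pi.nontrivial_at i

theorem nontrivial_endComplex {m j : ℕ} (hj : j ≤ m + 1) {n : ℤ} (hn : j * b + n = m) :
    Nontrivial (endComplex k A n) :=
  have := nontrivial_gradedHomPow (k := k) (A := A) (b := b) hj (d := n - m) (by omega)
  Pi.nontrivial_at m

theorem not_finiteDimensional_endComplex_zero (hb : 1 ≤ b) :
    ¬ FiniteDimensional k (endComplex k A 0) := by
  refine Module.not_finite_pi_of_infinite_setOf_nontrivial k <|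
    Set.infinite_of_injective_forall_mem (f := fun j : ℕ => j * b.toNat)
      (fun _ _ h => Nat.eq_of_mul_eq_mul_right (by omega) h) fun j => ?_
  have hb' : (b.toNat : ℤ) = b := Int.toNat_of_nonneg (by omega)
  exact nontrivial_gradedHomPow (b := b) (j := j)
    (Nat.le_succ_of_le (Nat.le_mul_of_pos_right j (by omega))) (by push_cast [hb']; ring)

theorem exists_le_nontrivial_endComplex (hb : 2 ≤ b) (N : ℤ) :
    ∃ n ≤ N, Nontrivial (endComplex k A n) :=
  ⟨(N.natAbs : ℤ) - (N.natAbs + 1) * b, by nlinarith [Int.natCast_natAbs N, neg_abs_le N],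
    nontrivial_endComplex (b := b) (m := N.natAbs) le_rfl (by push_cast; ring)⟩

omit [Nontrivial (A b)] in
theorem exists_ge_nontrivial_endComplex (N : ℤ) : ∃ n ≥ N, Nontrivial (endComplex k A n) :=
  ⟨N.toNat, Int.self_le_toNat N,
    nontrivial_endComplex (b := 0) (m := N.toNat) (j := 0) (Nat.zero_le _) (by simp)⟩

end AInfty

theorem stmt11_general (k : Type) [Field k] (A : ℤ → Type)
    [∀ i, AddCommGroup (A i)] [∀ i, Module k (A i)]
    (s : AInfty.Structure k A)
    (b : ℤ)
    (htop : Nontrivial (A b)) :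
    (1 ≤ b → ¬ (∀ n : ℤ, FiniteDimensional k (endComplex k A n))) ∧
    (2 ≤ b →
      (∀ N : ℤ, ∃ n : ℤ, n ≤ N ∧ ¬ Subsingleton (endComplex k A n)) ∧
      (∀ N : ℤ, ∃ n : ℤ, N ≤ n ∧ ¬ Subsingleton (endComplex k A n))) := by
  have := s.nontrivial_zero b
  refine ⟨fun hb h => not_finiteDimensional_endComplex_zero hb (h 0),
    fun hb => ⟨fun N => ?_, fun N => ?_⟩⟩
  · obtain ⟨n, hn, _⟩ := exists_le_nontrivial_endComplex (k := k) (A := A) hb N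
    exact ⟨n, hn, not_subsingleton _⟩
  · obtain ⟨n, hn, _⟩ := exists_ge_nontrivial_endComplex (k := k) (A := A) N
    exact ⟨n, hn, not_subsingleton _⟩

/-- **Lemma A.2** (Raedschelders–Stevenson). If `A` is a minimal proper (unital)
A∞-algebra over a field, concentrated in degrees `[a, b]` (so in particular `A b ≠ 0`)
with `a ≤ 0 ≤ b`, then: if `b ≥ 1` the DG endomorphism complex `Hom_{Mod∞ A}(A,A)` is
not locally finite, and if `b ≥ 2` it is moreover unbounded (nonzero in infinitely
many degrees in both directions). -/
theorem stmt11 (k : Type) [Field k] (A : ℤ → Type)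
    [∀ i, AddCommGroup (A i)] [∀ i, Module k (A i)]
    (s : AInfty.Structure k A) (hmin : s.IsMinimal)
    (hproper : ∀ i, FiniteDimensional k (A i))
    (a b : ℤ) (ha : a ≤ 0) (hb : 0 ≤ b)
    (hconc : ∀ i : ℤ, i < a ∨ b < i → Subsingleton (A i))
    (htop : Nontrivial (A b)) :
    (1 ≤ b → ¬ (∀ n : ℤ, FiniteDimensional k (endComplex k A n))) ∧
    (2 ≤ b →
      (∀ N : ℤ, ∃ n : ℤ, n ≤ N ∧ ¬ Subsingleton (endComplex k A n)) ∧
      (∀ N : ℤ, ∃ n : ℤ, N ≤ n ∧ ¬ Subsingleton (endComplex k A n))) :=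
  stmt11_general k A s b htop
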